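/- arXiv:1702.01007 — 5 statements merged into one kernel-verified Lean document; each statement's English description precedes it below -/
import Mathlib

section
/- Let d, p, r ∈ ℕ with d = p + 2r, let λ_1, …, λ_r be nonzero real numbers, let n ∈ ℕ, and let A be a finitely supported interpolatory mask of (d+1)×(d+1) real matrices satisfying the V_{p,Λ}-spectral condition at level n. Define the high-pass analysis mask B̃ by B̃_k := (−1)^{1−k} D^{−1} (A_{1−k})^T for k ∈ ℤ. Then B̃ satisfies the V_{p,Λ}-vanishing moment condition at level n: for every f ∈ V_{p,Λ} and every k ∈ ℤ, ∑_{j∈ℤ} (B̃_{j−2k})^T v^{[n+1]}_{f;j} = 0. -/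
open Matrix

/-- The diagonal matrix `D = diag(1, 1/2, …, 2^{-d})`. -/
noncomputable def Dmat (d : ℕ) : Matrix (Fin (d+1)) (Fin (d+1)) ℝ :=
  Matrix.diagonal fun i => (2:ℝ)⁻¹ ^ (i : ℕ)

/-- The Hermite sample vector `v^{[n]}_{f;k}` with `i`-th component
`2^{-n i} f^{(i)}(2^{-n} k)`. -/
noncomputable def hermiteSample (d : ℕ) (f : ℝ → ℝ) (n : ℕ) (k : ℤ) : Fin (d+1) → ℝ :=
  fun i => (2:ℝ)⁻¹ ^ (n * (i : ℕ)) * iteratedDeriv (i : ℕ) f ((2:ℝ)⁻¹ ^ n * (k : ℝ))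

/-- Membership in `V_{p,Λ}`, the span of `{1, x, …, x^p, e^{±λ_1 x}, …, e^{±λ_r x}}`. -/
def memV (p r : ℕ) (lam : Fin r → ℝ) (f : ℝ → ℝ) : Prop :=
  ∃ (a : Fin (p+1) → ℝ) (b c : Fin r → ℝ), ∀ x : ℝ,
    f x = (∑ i, a i * x ^ (i : ℕ)) + (∑ j, b j * Real.exp (lam j * x))
      + (∑ j, c j * Real.exp (-(lam j) * x))

/-- `V_{p,Λ}` is invariant under translation. -/
lemma memV_shift {p r : ℕ} {lam : Fin r → ℝ} {f : ℝ → ℝ} (hf : memV p r lam f) (c : ℝ) :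
    memV p r lam (fun x => f (x + c)) := by
  obtain ⟨a, b, cc, hfx⟩ := hf
  refine ⟨fun i => ∑ m : Fin (p+1), a m * (m:ℕ).choose i * c ^ ((m:ℕ) - (i:ℕ)),
    fun j => b j * Real.exp (lam j * c), fun j => cc j * Real.exp (-(lam j) * c), fun x => ?_⟩
  simp only []
  rw [hfx (x + c)]
  have hpoly : (∑ m : Fin (p+1), a m * (x + c) ^ (m:ℕ))
      = ∑ i : Fin (p+1), (∑ m : Fin (p+1), a m * (m:ℕ).choose i * c ^ ((m:ℕ) - (i:ℕ))) * x ^ (i:ℕ) := by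
    have step : ∀ m : Fin (p+1), a m * (x + c) ^ (m:ℕ)
        = ∑ i ∈ Finset.range (p+1), a m * ((m:ℕ).choose i * c ^ ((m:ℕ) - i)) * x ^ i := by
      intro m
      rw [add_pow]
      rw [Finset.mul_sum]
      rw [← Finset.sum_subset (Finset.range_subset_range.mpr (Nat.succ_le_succ (Nat.lt_succ_iff.mp m.2)))
        (fun i _ hi => by
          rw [Nat.choose_eq_zero_of_lt (by simpa using hi)]
          push_cast; ring)]
      exact Finset.sum_congr rfl fun i _ => by push_cast; ring
    rw [Finset.sum_congr rfl fun m _ => step m, Finset.sum_comm]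
    rw [← Fin.sum_univ_eq_sum_range
      (fun i => ∑ m : Fin (p+1), a m * ((m:ℕ).choose i * c ^ ((m:ℕ) - i)) * x ^ i) (p+1)]
    refine Finset.sum_congr rfl fun i _ => ?_
    rw [← Finset.sum_mul]
    congr 1
    exact Finset.sum_congr rfl fun m _ => by ring
  rw [hpoly]
  congr 1
  · congr 1
    refine Finset.sum_congr rfl fun j _ => ?_
    rw [mul_assoc, ← Real.exp_add]; ring_nf
  · refine Finset.sum_congr rfl fun j _ => ?_
    rw [mul_assoc, ← Real.exp_add]; ring_nf

/-- Splitting a finitely supported sum over `ℤ` into even and odd indices. -/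
lemma finsum_int_even_odd {M : Type*} [AddCommMonoid M] (F : ℤ → M)
    (hF : (Function.support F).Finite) :
    ∑ᶠ j, F j = (∑ᶠ l, F (2*l)) + ∑ᶠ l, F (2*l+1) := by
  classical
  set N : ℕ := hF.toFinset.sup Int.natAbs with hN
  have hbound : ∀ a ∈ Function.support F, a.natAbs ≤ N := by
    intro a ha
    exact Finset.le_sup (by simpa using ha)
  have hsupp : Function.support F ⊆ ↑(Finset.Icc (-(2*(N:ℤ))-2) (2*N+1)) := by
    intro a ha
    have := hbound a ha
    simp only [Finset.coe_Icc, Set.mem_Icc]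
    omega
  have h1 : Function.support (fun l => F (2*l)) ⊆ ↑(Finset.Icc (-(N:ℤ)-1) N) := by
    intro l hl
    have := hbound (2*l) hl
    simp only [Finset.coe_Icc, Set.mem_Icc]
    omega
  have h2 : Function.support (fun l => F (2*l+1)) ⊆ ↑(Finset.Icc (-(N:ℤ)-1) N) := by
    intro l hl
    have := hbound (2*l+1) hl
    simp only [Finset.coe_Icc, Set.mem_Icc]
    omega
  rw [finsum_eq_finset_sum_of_support_subset F hsupp,
    finsum_eq_finset_sum_of_support_subset _ h1,
    finsum_eq_finset_sum_of_support_subset _ h2]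
  have himg : Finset.Icc (-(2*(N:ℤ))-2) (2*N+1)
      = (Finset.Icc (-(N:ℤ)-1) N).image (fun l => 2*l)
        ∪ (Finset.Icc (-(N:ℤ)-1) N).image (fun l => 2*l+1) := by
    ext j
    simp only [Finset.mem_union, Finset.mem_image, Finset.mem_Icc]
    constructor
    · intro hj
      rcases Int.even_or_odd j with ⟨l, hl⟩ | ⟨l, hl⟩
      · exact Or.inl ⟨l, by omega, by omega⟩
      · exact Or.inr ⟨l, by omega, by omega⟩
    · rintro (⟨l, hl, rfl⟩ | ⟨l, hl, rfl⟩) <;> omega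
  have hdisj : Disjoint ((Finset.Icc (-(N:ℤ)-1) N).image (fun l => 2*l))
      ((Finset.Icc (-(N:ℤ)-1) N).image (fun l => 2*l+1)) := by
    rw [Finset.disjoint_left]
    rintro j hj1 hj2
    obtain ⟨l, _, rfl⟩ := Finset.mem_image.mp hj1
    obtain ⟨m, _, hm⟩ := Finset.mem_image.mp hj2
    omega
  rw [himg, Finset.sum_union hdisj,
    Finset.sum_image (fun x _ y _ h => by omega),
    Finset.sum_image (fun x _ y _ h => by omega)]

/-- Shifting the sampling index corresponds to translating the function. -/
lemma hermiteSample_add (d : ℕ) (f : ℝ → ℝ) (m : ℕ) (j t : ℤ) :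
    hermiteSample d f m (j + t) = hermiteSample d (fun x => f (x + (2:ℝ)⁻¹ ^ m * (t:ℝ))) m j := by
  funext i
  simp only [hermiteSample]
  rw [iteratedDeriv_comp_add_const]
  congr 1
  push_cast
  ring

/-- The rescaled level-`(n+1)` sample at an odd integer is a level-`n` sample of a translate. -/
lemma Emul_sample (d : ℕ) (f : ℝ → ℝ) (n : ℕ) (l : ℤ) :
    (Matrix.diagonal (fun i : Fin (d+1) => (2:ℝ) ^ (i:ℕ))).mulVec
      (hermiteSample d f (n+1) (2*l+1))
      = hermiteSample d (fun x => f (x + (2:ℝ)⁻¹ ^ (n+1))) n l := by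
  funext i
  rw [Matrix.mulVec_diagonal]
  simp only [hermiteSample]
  rw [iteratedDeriv_comp_add_const]
  have harg : (2:ℝ)⁻¹ ^ (n+1) * ((2*l+1 : ℤ):ℝ) = 2⁻¹ ^ n * (l:ℝ) + 2⁻¹ ^ (n+1) := by
    push_cast; rw [pow_succ]; ring
  have hc : (2:ℝ) ^ (i:ℕ) * 2⁻¹ ^ ((n+1) * (i:ℕ)) = 2⁻¹ ^ (n * (i:ℕ)) := by
    rw [add_mul, one_mul, pow_add, ← mul_assoc, mul_comm ((2:ℝ) ^ (i:ℕ)), mul_assoc, ← mul_pow]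
    norm_num
  rw [harg, ← mul_assoc, hc]

/-- If the interpolatory mask `A` satisfies the `V_{p,Λ}`-spectral condition at level `n`,
then the high-pass analysis mask `B̃_k = (-1)^{1-k} D⁻¹ (A_{1-k})ᵀ` satisfies the
`V_{p,Λ}`-vanishing moment condition at level `n`. -/
theorem stmt0 (d p r : ℕ) (hdpr : d = p + 2*r) (lam : Fin r → ℝ) (hlam : ∀ j, lam j ≠ 0)
    (n : ℕ) (A : ℤ → Matrix (Fin (d+1)) (Fin (d+1)) ℝ)
    (hfin : (Function.support A).Finite)
    (hinterp : ∀ k : ℤ, A (2*k) = if k = 0 then Dmat d else 0)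
    (hspec : ∀ f : ℝ → ℝ, memV p r lam f → ∀ j : ℤ,
      (∑ᶠ k : ℤ, (A (j - 2*k)).mulVec (hermiteSample d f n k)) = hermiteSample d f (n+1) j)
    (B : ℤ → Matrix (Fin (d+1)) (Fin (d+1)) ℝ)
    (hB : ∀ k : ℤ, B k = ((-1:ℝ) ^ (1 - k)) • ((Dmat d)⁻¹ * (A (1-k))ᵀ)) :
    ∀ f : ℝ → ℝ, memV p r lam f → ∀ k : ℤ,
      (∑ᶠ j : ℤ, ((B (j - 2*k))ᵀ).mulVec (hermiteSample d f (n+1) j)) = 0 := by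
  classical
  intro f hf k
  have h2ne : ((-1:ℝ)) ≠ 0 := by norm_num
  set E : Matrix (Fin (d+1)) (Fin (d+1)) ℝ :=
    Matrix.diagonal (fun i => (2:ℝ) ^ (i:ℕ)) with hEdef
  have hDE : Dmat d * E = 1 := by
    rw [hEdef, Dmat, Matrix.diagonal_mul_diagonal]
    have : (fun i : Fin (d+1) => (2:ℝ)⁻¹ ^ (i:ℕ) * 2 ^ (i:ℕ)) = fun _ => 1 := by
      funext i; rw [← mul_pow]; norm_num
    rw [this, Matrix.diagonal_one]
  have hDinv : (Dmat d)⁻¹ = E := inv_eq_right_inv hDE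
  have hEt : Eᵀ = E := by rw [hEdef]; exact Matrix.diagonal_transpose _
  have hBt : ∀ m : ℤ, (B m)ᵀ = ((-1:ℝ) ^ (1 - m)) • (A (1-m) * E) := by
    intro m
    rw [hB m, Matrix.transpose_smul, Matrix.transpose_mul, Matrix.transpose_transpose, hDinv, hEt]
  have hh : memV p r lam (fun x => f (x + (2:ℝ)⁻¹ ^ (n+1) * ((1+2*k : ℤ):ℝ))) := memV_shift hf _
  set h : ℝ → ℝ := fun x => f (x + (2:ℝ)⁻¹ ^ (n+1) * ((1+2*k : ℤ):ℝ)) with hhdef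
  have hg : memV p r lam (fun x => h (x + (2:ℝ)⁻¹ ^ (n+1))) := memV_shift hh _
  set g : ℝ → ℝ := fun x => h (x + (2:ℝ)⁻¹ ^ (n+1)) with hgdef
  set H : ℤ → (Fin (d+1) → ℝ) :=
    fun j => ((-1:ℝ) ^ (-j)) • (A (-j) * E).mulVec (hermiteSample d h (n+1) j) with hHdef
  have hmain : (∑ᶠ j : ℤ, ((B (j - 2*k))ᵀ).mulVec (hermiteSample d f (n+1) j))
      = ∑ᶠ j : ℤ, H j := by
    rw [← finsum_comp_equiv (Equiv.addRight (1+2*k : ℤ))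
      (f := fun j => ((B (j - 2*k))ᵀ).mulVec (hermiteSample d f (n+1) j))]
    refine finsum_congr fun j => ?_
    simp only [Equiv.coe_addRight]
    rw [hBt, Matrix.smul_mulVec, hHdef]
    have e2 : 1 - (j + (1+2*k) - 2*k) = -j := by ring
    rw [e2]
    simp only []
    congr 2
    rw [hermiteSample_add d f (n+1) j (1+2*k), ← hhdef]
  have hHfin : (Function.support H).Finite := by
    apply (hfin.image (fun m : ℤ => -m)).subset
    intro j hj
    have hA : A (-j) ≠ 0 := by
      intro h0
      apply hj
      simp [hHdef, h0]
    exact ⟨-j, hA, neg_neg j⟩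
  have heven : (∑ᶠ l : ℤ, H (2*l)) = hermiteSample d h (n+1) 0 := by
    have hside : ∀ l : ℤ, l ≠ 0 → H (2*l) = 0 := by
      intro l hl
      have h0 : A (-(2*l)) = 0 := by
        have h' := hinterp (-l)
        rw [show (2:ℤ)*(-l) = -(2*l) by ring] at h'
        rw [h', if_neg (fun hc => hl (neg_eq_zero.mp hc))]
      simp [hHdef, h0]
    rw [finsum_eq_single (fun l => H (2*l)) 0 hside]
    have h0 : A (-(2*(0:ℤ))) = Dmat d := by
      have h' := hinterp 0
      norm_num at h' ⊢
      exact h'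
    simp only [hHdef, h0, hDE]
    norm_num
  have hodd : (∑ᶠ l : ℤ, H (2*l+1)) = - hermiteSample d h (n+1) 0 := by
    have hterm : ∀ l : ℤ, H (2*l+1)
        = -((A (-1 - 2*l)).mulVec (hermiteSample d g n l)) := by
      intro l
      simp only [hHdef]
      have hsign : ((-1:ℝ)) ^ (-(2*l+1)) = -1 := by
        rw [show -(2*l+1) = 2*(-l-1)+1 by ring, zpow_add₀ h2ne, _root_.zpow_mul]
        norm_num
      rw [hsign]
      have hidx : -(2*l+1) = -1 - 2*l := by ring
      rw [hidx, neg_one_smul, ← Matrix.mulVec_mulVec, hEdef, Emul_sample, ← hgdef]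
    rw [finsum_congr hterm, finsum_neg_distrib]
    have hlast : hermiteSample d g (n+1) (-1) = hermiteSample d h (n+1) 0 := by
      funext i
      simp only [hermiteSample, hgdef]
      rw [iteratedDeriv_comp_add_const]
      norm_num
    rw [hspec g hg (-1), hlast]
  rw [hmain, finsum_int_even_odd H hHfin, heven, hodd, add_neg_cancel]
end

section
/- Let d ∈ ℕ and let A be a finitely supported interpolatory mask of (d+1)×(d+1) real matrices with symbol A(z) = ∑_{k∈ℤ} A_k z^k. Define Ã(z) := D^{−1}, B(z) := zI, and B̃(z) := z D^{−1} A^T(−z^{−1}), and for a matrix Laurent polynomial M set M^♯(z) := M^T(z^{−1}). Then for every z ∈ ℝ ∖ {0} the four biorthogonality conditions hold: (i) Ã^♯(z)A(z) + Ã^♯(−z)A(−z) = 2I; (ii) Ã^♯(z)B(z) + Ã^♯(−z)B(−z) = 0; (iii) B̃^♯(z)A(z) + B̃^♯(−z)A(−z) = 0; (iv) B̃^♯(z)B(z) + B̃^♯(−z)B(−z) = 2I. -/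
open Matrix

/-- For an interpolatory mask `A` with symbol `A(z)`, the filters
`Ã(z) = D⁻¹`, `B(z) = zI`, `B̃(z) = z D⁻¹ Aᵀ(-z⁻¹)` satisfy the four
biorthogonality conditions, where `M^♯(z) = Mᵀ(z⁻¹)`. -/
theorem stmt1 (d : ℕ) (A : ℤ → Matrix (Fin (d+1)) (Fin (d+1)) ℝ)
    (hfin : (Function.support A).Finite)
    (hinterp : ∀ k : ℤ, A (2*k) = if k = 0 then Dmat d else 0)
    (symA : ℝ → Matrix (Fin (d+1)) (Fin (d+1)) ℝ)
    (hsym : ∀ z : ℝ, z ≠ 0 → symA z = ∑ᶠ k : ℤ, z ^ k • A k)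
    (Atil Bfun Btil : ℝ → Matrix (Fin (d+1)) (Fin (d+1)) ℝ)
    (hAtil : ∀ z : ℝ, z ≠ 0 → Atil z = (Dmat d)⁻¹)
    (hBfun : ∀ z : ℝ, z ≠ 0 → Bfun z = z • (1 : Matrix (Fin (d+1)) (Fin (d+1)) ℝ))
    (hBtil : ∀ z : ℝ, z ≠ 0 → Btil z = z • ((Dmat d)⁻¹ * (symA (-z⁻¹))ᵀ))
    (sharp : (ℝ → Matrix (Fin (d+1)) (Fin (d+1)) ℝ) → ℝ → Matrix (Fin (d+1)) (Fin (d+1)) ℝ)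
    (hsharp : ∀ (M : ℝ → Matrix (Fin (d+1)) (Fin (d+1)) ℝ) (z : ℝ), z ≠ 0 →
      sharp M z = (M z⁻¹)ᵀ) :
    ∀ z : ℝ, z ≠ 0 →
      (sharp Atil z * symA z + sharp Atil (-z) * symA (-z)
          = 2 • (1 : Matrix (Fin (d+1)) (Fin (d+1)) ℝ)) ∧
      (sharp Atil z * Bfun z + sharp Atil (-z) * Bfun (-z) = 0) ∧
      (sharp Btil z * symA z + sharp Btil (-z) * symA (-z) = 0) ∧
      (sharp Btil z * Bfun z + sharp Btil (-z) * Bfun (-z)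
          = 2 • (1 : Matrix (Fin (d+1)) (Fin (d+1)) ℝ)) := by
  -- basic facts about D
  have hdet : (Dmat d).det ≠ 0 := by
    rw [Dmat, Matrix.det_diagonal]
    exact Finset.prod_ne_zero_iff.mpr fun i _ => pow_ne_zero _ (by norm_num)
  have hDu : IsUnit (Dmat d).det := hdet.isUnit
  have hDinvD : (Dmat d)⁻¹ * Dmat d = 1 := Matrix.nonsing_inv_mul _ hDu
  have hDDinv : Dmat d * (Dmat d)⁻¹ = 1 := Matrix.mul_nonsing_inv _ hDu
  have hDt : (Dmat d)ᵀ = Dmat d := by rw [Dmat, Matrix.diagonal_transpose]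
  have hDinvT : ((Dmat d)⁻¹)ᵀ = (Dmat d)⁻¹ := by
    rw [Matrix.transpose_nonsing_inv, hDt]
  have hA0 : A 0 = Dmat d := by have := hinterp 0; simpa using this
  -- key identity from interpolatory property
  have key : ∀ w : ℝ, w ≠ 0 → symA w + symA (-w) = (2:ℝ) • Dmat d := by
    intro w hw
    have hw' : -w ≠ 0 := neg_ne_zero.mpr hw
    rw [hsym w hw, hsym (-w) hw']
    have hs1 : (Function.support fun k : ℤ => w ^ k • A k).Finite :=
      hfin.subset (fun k hk => by
        simp only [Function.mem_support] at *
        intro h; exact hk (by rw [h, smul_zero]))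
    have hs2 : (Function.support fun k : ℤ => (-w) ^ k • A k).Finite :=
      hfin.subset (fun k hk => by
        simp only [Function.mem_support] at *
        intro h; exact hk (by rw [h, smul_zero]))
    rw [← finsum_add_distrib hs1 hs2]
    rw [finsum_eq_single _ (0:ℤ)]
    · simp [hA0, two_smul]
    · intro k hk
      rcases Int.even_or_odd k with ⟨m, hm⟩ | hodd
      · have hm' : k = 2 * m := by omega
        have hmne : m ≠ 0 := by omega
        have : A k = 0 := by rw [hm', hinterp m, if_neg hmne]
        simp [this]
      · have : (-w) ^ k = -(w ^ k) := Odd.neg_zpow hodd w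
        rw [this, neg_smul, add_neg_cancel]
  intro z hz
  have hnz : -z ≠ 0 := neg_ne_zero.mpr hz
  have hzi : z⁻¹ ≠ 0 := inv_ne_zero hz
  have hnzi : (-z)⁻¹ ≠ 0 := inv_ne_zero hnz
  set P := symA z with hP
  set Q := symA (-z) with hQ
  have hkey : P + Q = (2:ℝ) • Dmat d := key z hz
  -- sharp of Atil
  have hsA : sharp Atil z = (Dmat d)⁻¹ := by
    rw [hsharp Atil z hz, hAtil _ hzi, hDinvT]
  have hsA' : sharp Atil (-z) = (Dmat d)⁻¹ := by
    rw [hsharp Atil (-z) hnz, hAtil _ hnzi, hDinvT]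
  -- sharp of Btil
  have hsB : sharp Btil z = z⁻¹ • (Q * (Dmat d)⁻¹) := by
    rw [hsharp Btil z hz, hBtil _ hzi]
    rw [Matrix.transpose_smul, Matrix.transpose_mul, Matrix.transpose_transpose, hDinvT,
      inv_inv, hQ]
  have hsB' : sharp Btil (-z) = (-z)⁻¹ • (P * (Dmat d)⁻¹) := by
    rw [hsharp Btil (-z) hnz, hBtil _ hnzi]
    rw [Matrix.transpose_smul, Matrix.transpose_mul, Matrix.transpose_transpose, hDinvT,
      inv_inv, neg_neg, hP]
  have hBz : Bfun z = z • 1 := hBfun z hz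
  have hBz' : Bfun (-z) = (-z) • 1 := hBfun (-z) hnz
  refine ⟨?_, ?_, ?_, ?_⟩
  · -- (i)
    rw [hsA, hsA', ← Matrix.mul_add, hkey, Matrix.mul_smul, hDinvD]
    norm_num [two_smul]
  · -- (ii)
    rw [hsA, hsA', hBz, hBz', Matrix.mul_smul, Matrix.mul_smul, neg_smul, add_neg_cancel]
  · -- (iii)
    rw [hsB, hsB', Matrix.smul_mul, Matrix.smul_mul]
    have hcomm : Q * (Dmat d)⁻¹ * P = P * (Dmat d)⁻¹ * Q := by
      have hPe : P = (2:ℝ) • Dmat d - Q := by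
        rw [← hkey]; abel
      have hcan : ∀ X : Matrix (Fin (d+1)) (Fin (d+1)) ℝ,
          Dmat d * ((Dmat d)⁻¹ * X) = X := fun X => by
        rw [← mul_assoc, hDDinv, Matrix.one_mul]
      rw [hPe]
      simp only [Matrix.mul_sub, Matrix.sub_mul, Matrix.smul_mul, Matrix.mul_smul,
        mul_assoc, hDinvD, hcan, Matrix.mul_one]
    rw [hcomm]
    rw [inv_neg, neg_smul, add_neg_cancel]
  · -- (iv)
    rw [hsB, hsB', hBz, hBz', Matrix.smul_mul, Matrix.smul_mul, Matrix.mul_smul,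
      Matrix.mul_smul, smul_smul, smul_smul, inv_mul_cancel₀ hz,
      inv_mul_cancel₀ hnz, one_smul, one_smul, Matrix.mul_one, Matrix.mul_one,
      ← Matrix.add_mul]
    rw [add_comm Q P, hkey, Matrix.smul_mul, hDDinv]
    norm_num [two_smul]
end

section
/- Let d ∈ ℕ, let A be a finitely supported interpolatory mask of (d+1)×(d+1) real matrices, and let c : ℤ → ℝ^{d+1} be finitely supported. Define the low-pass coefficients c̃_k := D^{−1} c_{2k} and the wavelet coefficients d_k := ∑_{j∈ℤ} (B̃_{j−2k})^T c_j, where B̃_m := (−1)^{1−m} D^{−1} (A_{1−m})^T. Then perfect reconstruction holds: for every k ∈ ℤ, c_k = ∑_{j∈ℤ} A_{k−2j} c̃_j + e_k, where e_{2m} := 0 and e_{2m+1} := d_m for m ∈ ℤ. -/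
open Matrix

lemma parity_split {M : Type*} [AddCommMonoid M] (f : ℤ → M)
    (hf : (Function.support f).Finite) :
    ∑ᶠ j : ℤ, f j = (∑ᶠ l : ℤ, f (2*l)) + ∑ᶠ l : ℤ, f (2*l+1) := by
  have hinjE : Function.Injective (fun l : ℤ => 2*l) := fun a b h => by dsimp only at h; omega
  have hinjO : Function.Injective (fun l : ℤ => 2*l+1) := fun a b h => by dsimp only at h; omega
  have huniv : Set.range (fun l : ℤ => 2*l) ∪ Set.range (fun l : ℤ => 2*l+1) = Set.univ := by
    ext j
    simp only [Set.mem_union, Set.mem_range, Set.mem_univ, iff_true]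
    rcases Int.even_or_odd j with ⟨m, hm⟩ | ⟨m, hm⟩
    · exact Or.inl ⟨m, by omega⟩
    · exact Or.inr ⟨m, by omega⟩
  have hdisj : Disjoint (Set.range (fun l : ℤ => 2*l)) (Set.range (fun l : ℤ => 2*l+1)) := by
    rw [Set.disjoint_left]
    rintro x ⟨a, rfl⟩ ⟨b, hb⟩
    dsimp only at hb
    omega
  calc ∑ᶠ j : ℤ, f j = ∑ᶠ j ∈ Set.univ, f j := (finsum_mem_univ f).symm
    _ = ∑ᶠ j ∈ Set.range (fun l : ℤ => 2*l) ∪ Set.range (fun l : ℤ => 2*l+1), f j := by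
        rw [huniv]
    _ = (∑ᶠ j ∈ Set.range (fun l : ℤ => 2*l), f j)
        + ∑ᶠ j ∈ Set.range (fun l : ℤ => 2*l+1), f j :=
        finsum_mem_union' hdisj (hf.inter_of_right _) (hf.inter_of_right _)
    _ = (∑ᶠ l : ℤ, f (2*l)) + ∑ᶠ l : ℤ, f (2*l+1) := by
        rw [finsum_mem_range hinjE, finsum_mem_range hinjO]

/-- Perfect reconstruction for the prediction-correction filter bank associated to an
interpolatory Hermite mask: with low-pass coefficients `c̃_k = D⁻¹ c_{2k}` and
wavelet coefficients `d_k = ∑_j (B̃_{j-2k})ᵀ c_j`, where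
`B̃_m = (-1)^{1-m} D⁻¹ (A_{1-m})ᵀ`, one has
`c_k = ∑_j A_{k-2j} c̃_j + e_k` with `e_{2m} = 0`, `e_{2m+1} = d_m`. -/
theorem stmt3 (d : ℕ) (A : ℤ → Matrix (Fin (d+1)) (Fin (d+1)) ℝ)
    (hfinA : (Function.support A).Finite)
    (hinterp : ∀ k : ℤ, A (2*k) = if k = 0 then Dmat d else 0)
    (c : ℤ → Fin (d+1) → ℝ) (hfinc : (Function.support c).Finite)
    (B : ℤ → Matrix (Fin (d+1)) (Fin (d+1)) ℝ)
    (hB : ∀ m : ℤ, B m = ((-1:ℝ) ^ (1 - m)) • ((Dmat d)⁻¹ * (A (1-m))ᵀ))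
    (ct : ℤ → Fin (d+1) → ℝ) (hct : ∀ k : ℤ, ct k = ((Dmat d)⁻¹).mulVec (c (2*k)))
    (dcoef : ℤ → Fin (d+1) → ℝ)
    (hdcoef : ∀ k : ℤ, dcoef k = ∑ᶠ j : ℤ, ((B (j - 2*k))ᵀ).mulVec (c j))
    (e : ℤ → Fin (d+1) → ℝ)
    (he0 : ∀ m : ℤ, e (2*m) = 0) (he1 : ∀ m : ℤ, e (2*m+1) = dcoef m) :
    ∀ k : ℤ, c k = (∑ᶠ j : ℤ, (A (k - 2*j)).mulVec (ct j)) + e k := by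
  have hdet : (Dmat d).det ≠ 0 := by
    rw [Dmat, Matrix.det_diagonal]
    positivity
  have hDD : Dmat d * (Dmat d)⁻¹ = 1 := Matrix.mul_nonsing_inv _ (isUnit_iff_ne_zero.mpr hdet)
  have hDv : ∀ x : Fin (d+1) → ℝ, (Dmat d).mulVec (((Dmat d)⁻¹).mulVec x) = x := by
    intro x
    rw [Matrix.mulVec_mulVec, hDD, Matrix.one_mulVec]
  have hDt : ((Dmat d)⁻¹)ᵀ = (Dmat d)⁻¹ := by
    rw [Matrix.transpose_nonsing_inv, Dmat, Matrix.diagonal_transpose]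
  intro k
  rcases Int.even_or_odd k with ⟨m, hm⟩ | ⟨m, hm⟩
  · -- even case : k = 2*m
    have hk : k = 2*m := by omega
    subst hk
    rw [he0, add_zero]
    rw [finsum_eq_single _ m]
    · have h0 : (2:ℤ)*m - 2*m = 2*0 := by ring
      rw [h0, hinterp, if_pos rfl, hct, hDv]
    · intro x hx
      have h1 : (2:ℤ)*m - 2*x = 2*(m-x) := by ring
      rw [h1, hinterp, if_neg (by omega), Matrix.zero_mulVec]
  · -- odd case : k = 2*m+1
    subst hm
    rw [he1]
    have hd : dcoef m = c (2*m+1) - ∑ᶠ j : ℤ, (A (2*m+1 - 2*j)).mulVec (ct j) := by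
      rw [hdcoef]
      set g : ℤ → Fin (d+1) → ℝ := fun j => ((B (j - 2*m))ᵀ).mulVec (c j) with hg
      have hgsupp : (Function.support g).Finite := by
        apply hfinc.subset
        intro j hj
        simp only [Function.mem_support] at hj ⊢
        intro hc
        apply hj
        rw [hg]
        simp [hc, Matrix.mulVec_zero]
      rw [parity_split g hgsupp]
      have h1 : ∀ l : ℤ, g (2*l) = -((A (2*m+1 - 2*l)).mulVec (ct l)) := by
        intro l
        rw [hg]
        simp only
        rw [hB]
        have ha : (1:ℤ) - (2*l - 2*m) = 2*m+1-2*l := by ring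
        have hodd : Odd ((1:ℤ) - (2*l - 2*m)) := ⟨m - l, by ring⟩
        rw [Matrix.transpose_smul, Matrix.transpose_mul, Matrix.transpose_transpose, hDt,
          hodd.neg_one_zpow, ha, Matrix.smul_mulVec, neg_one_smul,
          ← Matrix.mulVec_mulVec, ← hct]
      have h2 : (∑ᶠ l : ℤ, g (2*l+1)) = c (2*m+1) := by
        rw [finsum_eq_single _ m]
        · rw [hg]
          simp only
          rw [hB]
          have ha : (1:ℤ) - (2*m+1 - 2*m) = 2*0 := by ring
          have heven : Even ((1:ℤ) - (2*m+1 - 2*m)) := ⟨0, by omega⟩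
          rw [Matrix.transpose_smul, Matrix.transpose_mul, Matrix.transpose_transpose, hDt,
            heven.neg_one_zpow, one_smul, ha, hinterp, if_pos rfl, hDD, Matrix.one_mulVec]
        · intro l hl
          rw [hg]
          simp only
          rw [hB]
          have ha : (1:ℤ) - (2*l+1 - 2*m) = 2*(m-l) := by ring
          rw [Matrix.transpose_smul, ha, hinterp, if_neg (by omega)]
          simp
      have h3 : (∑ᶠ l : ℤ, g (2*l)) = -∑ᶠ j : ℤ, (A (2*m+1 - 2*j)).mulVec (ct j) := by
        calc (∑ᶠ l : ℤ, g (2*l)) = ∑ᶠ l : ℤ, -((A (2*m+1 - 2*l)).mulVec (ct l)) := by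
              exact finsum_congr h1
          _ = -∑ᶠ j : ℤ, (A (2*m+1 - 2*j)).mulVec (ct j) := finsum_neg_distrib _
      rw [h2, h3]
      abel
    rw [hd]
    abel
end

section
/- Let λ ∈ ℝ ∖ {0}, let a, b, c ∈ ℝ, and let f(x) = a + b·e^{λx} + c·e^{−λx}. For j ∈ ℤ set v_j := (f(j), f'(j), f''(j)) ∈ ℝ³, and let H₀ := [[−1, −sinh(λ)/λ, (1−cosh(λ))/λ²], [0, −cosh(λ), −sinh(λ)/λ], [0, −λ·sinh(λ), −cosh(λ)]]. Then v_{j+1} + H₀ v_j = 0 for all j ∈ ℤ; that is, the convolution operator with symbol H*_{0,{λ}}(z) = z^{−1}I + H₀ annihilates the Hermite sample sequences of every function in the span of {1, e^{λx}, e^{−λx}}. -/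
/-!
The jet of `x ↦ exp (μ x)` at `x` is `exp (μ x) • (1, μ, μ²)`, and for `μ ∈ {0, λ, -λ}` the vector
`(1, μ, μ²)` is an eigenvector of `-H₀` with eigenvalue `exp μ`; for `μ = ±λ` this is the identity
`cosh λ + (μ / λ) sinh λ = exp μ`. Shifting `j` to `j + 1` multiplies the coefficient of each mode
by `exp μ`, so `v (j + 1) = -H₀ v j` holds mode by mode.
-/

open Matrix Real

def expJet (μ : ℝ) : Fin 3 → ℝ := ![1, μ, μ ^ 2]

theorem iteratedDeriv_const_add_exp_add_exp {n : ℕ} (hn : 0 < n) (a b c μ ν x : ℝ) :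
    iteratedDeriv n (fun x => a + b * exp (μ * x) + c * exp (ν * x)) x =
      b * μ ^ n * exp (μ * x) + c * ν ^ n * exp (ν * x) := by
  simp_rw [add_assoc]
  rw [iteratedDeriv_const_add hn, iteratedDeriv_fun_add (by fun_prop) (by fun_prop),
    iteratedDeriv_const_mul_field, iteratedDeriv_const_mul_field, iteratedDeriv_exp_const_mul,
    iteratedDeriv_exp_const_mul]
  ring

theorem jet_const_add_exp_add_exp (a b c μ ν x : ℝ) :
    let f := fun x => a + b * exp (μ * x) + c * exp (ν * x)
    ![f x, deriv f x, iteratedDeriv 2 f x] =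
      a • expJet 0 + (b * exp (μ * x)) • expJet μ +
        (c * exp (ν * x)) • expJet ν := by
  intro f
  rw [← iteratedDeriv_one, iteratedDeriv_const_add_exp_add_exp one_pos,
    iteratedDeriv_const_add_exp_add_exp two_pos]
  ext i
  fin_cases i <;>
    simp only [Fin.zero_eta, Fin.mk_one, Fin.reduceFinMk, Fin.isValue, cons_val_zero, cons_val_one,
      cons_val, expJet, pow_one, ne_eq, OfNat.ofNat_ne_zero, not_false_eq_true, zero_pow,
      smul_cons, smul_eq_mul, mul_one, mul_zero, smul_empty, add_cons, head_cons, tail_cons,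
      zero_add, empty_add_empty, Pi.add_apply, f] <;>
    ring

theorem exp_eq_cosh_add_div_mul_sinh {lam μ : ℝ} (hlam : lam ≠ 0) (hμ : μ ^ 2 = lam ^ 2) :
    exp μ = cosh lam + μ / lam * sinh lam := by
  rcases sq_eq_sq_iff_eq_or_eq_neg.mp hμ with rfl | rfl
  · rw [div_self hlam, one_mul, cosh_add_sinh]
  · rw [neg_div, div_self hlam, neg_one_mul, ← sub_eq_add_neg, cosh_sub_sinh]

noncomputable def H₀ (lam : ℝ) : Matrix (Fin 3) (Fin 3) ℝ :=
  !![-1, -sinh lam / lam, (1 - cosh lam) / lam ^ 2;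
     0, -cosh lam, -sinh lam / lam;
     0, -lam * sinh lam, -cosh lam]

theorem H₀_mulVec_expJet_zero (lam : ℝ) :
    H₀ lam *ᵥ expJet 0 = -expJet 0 := by
  ext i
  fin_cases i <;> simp [H₀, expJet]

theorem H₀_mulVec_expJet {lam μ : ℝ} (hlam : lam ≠ 0)
    (hμ : μ ^ 2 = lam ^ 2) :
    H₀ lam *ᵥ expJet μ = -exp μ • expJet μ := by
  rw [exp_eq_cosh_add_div_mul_sinh hlam hμ]
  ext i
  fin_cases i <;>
    simp only [mulVec, dotProduct, H₀, expJet, Fin.sum_univ_three, Fin.zero_eta,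
      Fin.mk_one, Fin.reduceFinMk, Fin.isValue, of_apply, cons_val', cons_val_fin_one,
      cons_val_zero, cons_val_one, cons_val, neg_mul, mul_one, zero_add, neg_add_rev,
      Pi.smul_apply, smul_eq_mul] <;>
    field_simp
  · linear_combination (1 - cosh lam) * hμ
  · ring
  · linear_combination μ * sinh lam * hμ

/-- The convolution operator with symbol `H*_{0,{λ}}(z) = z⁻¹ I + H₀` annihilates the
Hermite sample sequences `(f(j), f'(j), f''(j))` of every `f` in the span of
`{1, e^{λx}, e^{−λx}}`: `v_{j+1} + H₀ v_j = 0` for all integers `j`. -/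
theorem stmt9 (lam : ℝ) (hlam : lam ≠ 0) (a b c : ℝ) (f : ℝ → ℝ)
    (hf : ∀ x : ℝ, f x = a + b * Real.exp (lam * x) + c * Real.exp (-lam * x))
    (v : ℤ → Fin 3 → ℝ)
    (hv : ∀ j : ℤ, v j = ![f (j : ℝ), deriv f (j : ℝ), iteratedDeriv 2 f (j : ℝ)])
    (H0 : Matrix (Fin 3) (Fin 3) ℝ)
    (hH0 : H0 = !![-1, -Real.sinh lam / lam, (1 - Real.cosh lam) / lam^2;
                   0, -Real.cosh lam, -Real.sinh lam / lam;
                   0, -lam * Real.sinh lam, -Real.cosh lam]) :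
    ∀ j : ℤ, v (j+1) + H0.mulVec (v j) = 0 := by
  obtain rfl : f = fun x => a + b * exp (lam * x) + c * exp (-lam * x) := funext hf
  obtain rfl : H0 = H₀ lam := hH0
  intro j
  have hshift (μ : ℝ) : exp (μ * ↑(j + 1)) = exp μ * exp (μ * j) := by
    rw [← exp_add]; push_cast; ring_nf
  rw [hv, hv, jet_const_add_exp_add_exp, jet_const_add_exp_add_exp, mulVec_add, mulVec_add,
    mulVec_smul, mulVec_smul, mulVec_smul, H₀_mulVec_expJet_zero,
    H₀_mulVec_expJet hlam rfl,
    H₀_mulVec_expJet hlam (neg_sq lam), hshift, hshift]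
  module
end

section
/- Let B̃ be the 3×3 matrix mask with coefficients B̃_{−2} = (1/16)[[−8, 5, −1], [−15, 7, −1], [0, −12, 4]], B̃_{−1} = I, B̃_0 = (1/16)[[−8, −5, −1], [15, 7, 1], [0, 12, 4]], and B̃_k = 0 otherwise (so that its symbol is (1/(16z²))[[−8(z−1)², −5(z²−1), −(z²+1)], [15(z²−1), 7z²+16z+7, z²−1], [0, 12(z²−1), 4(z²+4z+1)]]). Then B̃ has polynomial vanishing moments of order 3: for every real polynomial f of degree at most 2 and every j ∈ ℤ, ∑_{k∈ℤ} B̃_{j−k} v_{f;k} = 0, where v_{f;k} := (f(k), f'(k), f''(k)) ∈ ℝ³; equivalently, B̃_{−2} v_{f;j+2} + v_{f;j+1} + B̃_0 v_{f;j} = 0 for all j ∈ ℤ. -/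
/-!
The mask is supported on `{-2, -1, 0}`, so the convolution at `j` has only three terms, and
for `f = a + b x + c x²` the Hermite data are `(f(x), b + 2cx, 2c)`; the three-term relation is
then a polynomial identity in `j`, checked coordinatewise.
-/

open Matrix

theorem hasDerivAt_quadratic (a b c x : ℝ) :
    HasDerivAt (fun x : ℝ => a + b * x + c * x ^ 2) (b + 2 * c * x) x :=
  (((hasDerivAt_id x).const_mul b).const_add a).add ((hasDerivAt_pow 2 x).const_mul c)
    |>.congr_deriv (by simp; ring)

theorem deriv_quadratic (a b c : ℝ) :
    deriv (fun x : ℝ => a + b * x + c * x ^ 2) = fun x => b + 2 * c * x :=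
  funext fun x => (hasDerivAt_quadratic a b c x).deriv

theorem iteratedDeriv_two_quadratic (a b c : ℝ) :
    iteratedDeriv 2 (fun x : ℝ => a + b * x + c * x ^ 2) = fun _ => 2 * c := by
  rw [iteratedDeriv_succ, iteratedDeriv_one, deriv_quadratic]
  funext x
  simp

theorem finsum_mulVec_eq_three_terms {R n : Type*} [NonUnitalNonAssocSemiring R] [Fintype n]
    (B : ℤ → Matrix n n R) (hB : ∀ k, k ≠ -2 → k ≠ -1 → k ≠ 0 → B k = 0)
    (v : ℤ → n → R) (j : ℤ) :
    ∑ᶠ k, B (j - k) *ᵥ v k = B (-2) *ᵥ v (j + 2) + B (-1) *ᵥ v (j + 1) + B 0 *ᵥ v j := by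
  have hsupp : (Function.support fun k => B (j - k) *ᵥ v k) ⊆ ({j + 2, j + 1, j} : Finset ℤ) := by
    intro k hk
    by_contra hk'
    simp only [Finset.coe_insert, Finset.coe_singleton, Set.mem_insert_iff,
      Set.mem_singleton_iff, not_or] at hk'
    exact hk (by simp only [hB (j - k) (by omega) (by omega) (by omega), zero_mulVec])
  rw [finsum_eq_finsetSum_of_support_subset _ hsupp, Finset.sum_insert (by simp),
    Finset.sum_insert (by simp), Finset.sum_singleton, add_assoc]
  simp only [sub_add_cancel_left, sub_self]

def quadraticHermiteData (a b c x : ℝ) : Fin 3 → ℝ := ![a + b * x + c * x ^ 2, b + 2 * c * x, 2 * c]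

theorem quinticHermite_highPass_annihilates_quadraticHermiteData (a b c x : ℝ) :
    ((1/16 : ℝ) • !![-8, 5, -1; -15, 7, -1; 0, -12, 4]) *ᵥ quadraticHermiteData a b c (x + 2)
      + quadraticHermiteData a b c (x + 1)
      + ((1/16 : ℝ) • !![-8, -5, -1; 15, 7, 1; 0, 12, 4]) *ᵥ quadraticHermiteData a b c x = 0 := by
  ext i
  fin_cases i <;> simp [quadraticHermiteData, vecHead, vecTail] <;> ring

/-- The high-pass analysis mask of the quintic Hermite spline filter bank has polynomial
vanishing moments of order 3: it annihilates the Hermite sample sequences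
`v_{f;k} = (f(k), f'(k), f''(k))` of every polynomial `f` of degree at most 2. -/
theorem stmt17 (B : ℤ → Matrix (Fin 3) (Fin 3) ℝ)
    (hBm2 : B (-2) = (1/16 : ℝ) • !![-8, 5, -1; -15, 7, -1; 0, -12, 4])
    (hBm1 : B (-1) = 1)
    (hB0 : B 0 = (1/16 : ℝ) • !![-8, -5, -1; 15, 7, 1; 0, 12, 4])
    (hBz : ∀ k : ℤ, k ≠ -2 → k ≠ -1 → k ≠ 0 → B k = 0)
    (f : ℝ → ℝ) (hf : ∃ a b c : ℝ, ∀ x : ℝ, f x = a + b * x + c * x^2)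
    (v : ℤ → Fin 3 → ℝ)
    (hv : ∀ k : ℤ, v k = ![f (k : ℝ), deriv f (k : ℝ), iteratedDeriv 2 f (k : ℝ)]) :
    ∀ j : ℤ,
      ((∑ᶠ k : ℤ, (B (j - k)).mulVec (v k)) = 0) ∧
      (B (-2)).mulVec (v (j+2)) + v (j+1) + (B 0).mulVec (v j) = 0 := by
  intro j
  obtain ⟨a, b, c, hfx⟩ := hf
  obtain rfl : f = fun x => a + b * x + c * x ^ 2 := funext hfx
  have hv' : ∀ k : ℤ, v k = quadraticHermiteData a b c k := fun k => by
    rw [hv, deriv_quadratic, iteratedDeriv_two_quadratic]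
    rfl
  have hrel : B (-2) *ᵥ v (j + 2) + v (j + 1) + B 0 *ᵥ v j = 0 := by
    rw [hBm2, hB0, hv', hv', hv']
    push_cast
    exact quinticHermite_highPass_annihilates_quadraticHermiteData a b c j
  refine ⟨?_, hrel⟩
  rwa [finsum_mulVec_eq_three_terms B hBz, hBm1, one_mulVec]
end
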